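/- Let (A_k)_{k=1,…,K} be a partition of Q into nonempty sets and suppose ν(C) = Σ_{k=1}^K ν_k(C ∩ A_k) for all C ⊆ Q, where each ν_k is a real-valued function on subsets of Q. Then for every permutation π of (1,…,q), the paired single-permutation PermutationSHAP estimates satisfy the additive recovery property Σ_{j ∈ A_k} φ̂_j^{(1)} = Σ_{j ∈ A_k} φ_j for every 1 ≤ k ≤ K, where φ_j are the Shapley values of ν. -/

import Mathlib

open Finset

/-- Shapley value of player `j` for value function `ν` on coalitions of `Fin q`. -/
noncomputable def shapley {q : ℕ} (ν : Finset (Fin q) → ℝ) (j : Fin q) : ℝ :=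
  ((q : ℝ))⁻¹ * ∑ C ∈ (Finset.univ.erase j).powerset,
    (((q - 1).choose C.card : ℝ))⁻¹ * (ν (insert j C) - ν C)

/-- The coalition `C_{π,j}` of players preceding `j` in the permutation `π`,
where `π i` is the player at position `i`. -/
def preceding {q : ℕ} (π : Equiv.Perm (Fin q)) (j : Fin q) : Finset (Fin q) :=
  (Finset.univ.filter (fun i : Fin q => i < π.symm j)).image π

/-- The reversed permutation `ρ(π) = (π_q, …, π_1)`. -/
def reversedPerm {q : ℕ} (π : Equiv.Perm (Fin q)) : Equiv.Perm (Fin q) :=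
  Fin.revPerm.trans π

/-- Paired single-permutation PermutationSHAP estimate. -/
noncomputable def pairedEstimate {q : ℕ} (ν : Finset (Fin q) → ℝ)
    (π : Equiv.Perm (Fin q)) (j : Fin q) : ℝ :=
  (1 / 2 : ℝ) * (ν (insert j (preceding π j)) - ν (preceding π j)
    + ν (insert j (preceding (reversedPerm π) j)) - ν (preceding (reversedPerm π) j))

/-!
Both sides equal `νₖ(Aₖ) - νₖ(∅)`. For `j ∈ Aₖ` the marginal contributions of `j` to `ν` and to
the block game `C ↦ νₖ(C ∩ Aₖ)` coincide, so the estimate and the Shapley value may both be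
computed for the block game. There, summing marginal contributions over `Aₖ` along any order
telescopes, while the players outside `Aₖ` are null, so efficiency of the Shapley value gives
the same total.
-/

open Function

lemma inv_mul_inv_choose_pred_eq_inv_choose_succ_div {q s : ℕ} (h : s < q) :
    (q : ℝ)⁻¹ * ((q - 1).choose s : ℝ)⁻¹ = (q.choose (s + 1) : ℝ)⁻¹ / (s + 1) := by
  obtain ⟨n, rfl⟩ : ∃ n, q = n + 1 := ⟨q - 1, by omega⟩
  have key : ((n + 1 : ℕ) : ℝ) * n.choose s = (n + 1).choose (s + 1) * (s + 1) := by
    exact_mod_cast Nat.add_one_mul_choose_eq n s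
  rw [Nat.add_sub_cancel, ← mul_inv, key, div_eq_mul_inv, mul_inv]

lemma inv_mul_inv_choose_pred_eq_inv_choose_div_sub {q s : ℕ} (h : s < q) :
    (q : ℝ)⁻¹ * ((q - 1).choose s : ℝ)⁻¹ = (q.choose s : ℝ)⁻¹ / (q - s) := by
  obtain ⟨n, rfl⟩ : ∃ n, q = n + 1 := ⟨q - 1, by omega⟩
  have key : ((n + 1 : ℕ) : ℝ) * n.choose s = (n + 1).choose s * ((n + 1 : ℕ) - s) := by
    rw [mul_comm, ← Nat.cast_sub h.le]
    exact_mod_cast Nat.choose_mul_succ_eq n s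
  rw [Nat.add_sub_cancel, ← mul_inv, key, div_eq_mul_inv, mul_inv]

lemma sum_sum_powerset_erase_insert {α β : Type*} [Fintype α] [DecidableEq α] [AddCommMonoid β]
    (f : α → Finset α → β) :
    ∑ j, ∑ C ∈ (univ.erase j).powerset, f j (insert j C) = ∑ S, ∑ j ∈ S, f j S := by
  have reindex : ∀ j, ∑ C ∈ (univ.erase j).powerset, f j (insert j C)
      = ∑ S ∈ univ.filter (j ∈ ·), f j S := fun j =>
    sum_nbij' (insert j) (erase · j) (by simp) (by simp [subset_erase])
      (fun C hC => erase_insert (by simpa [subset_erase] using hC))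
      (fun S hS => insert_erase (by simpa using hS)) (fun _ _ => rfl)
  simp_rw [reindex]
  exact sum_comm' (by simp)

lemma sum_sum_powerset_erase {α β : Type*} [Fintype α] [DecidableEq α] [AddCommMonoid β]
    (f : α → Finset α → β) :
    ∑ j, ∑ C ∈ (univ.erase j).powerset, f j C = ∑ C, ∑ j ∈ Cᶜ, f j C :=
  sum_comm' (by simp [subset_erase])

lemma shapley_eq_sum_powerset_erase {q : ℕ} (ν : Finset (Fin q) → ℝ) (j : Fin q) :
    shapley ν j = ∑ C ∈ (univ.erase j).powerset,
      ((q.choose #(insert j C) : ℝ)⁻¹ * ν (insert j C) / #(insert j C)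
        - (q.choose #C : ℝ)⁻¹ * ν C / (q - #C)) := by
  rw [shapley, mul_sum]
  refine sum_congr rfl fun C hC => ?_
  have hj : j ∉ C := by simpa [subset_erase] using hC
  have hC_lt : #C < q := by simpa using card_lt_univ_of_notMem hj
  rw [card_insert_of_notMem hj, ← mul_assoc, mul_sub, Nat.cast_add_one]
  congr 1
  · rw [inv_mul_inv_choose_pred_eq_inv_choose_succ_div hC_lt]; ring
  · rw [inv_mul_inv_choose_pred_eq_inv_choose_div_sub hC_lt]; ring

lemma sum_shapley {q : ℕ} (ν : Finset (Fin q) → ℝ) :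
    ∑ j, shapley ν j = ν univ - ν ∅ := by
  -- Each coalition `S` gains `d S` in total from its members and loses `d S` in total from the
  -- players outside it; only `∅` has no members and only `univ` has no outsiders.
  set d : Finset (Fin q) → ℝ := fun S => (q.choose #S : ℝ)⁻¹ * ν S with hd
  have hins : ∑ S, ∑ _j ∈ S, d S / #S = ∑ S, d S - d ∅ := by
    rw [← sum_erase_eq_sub (mem_univ ∅), ← sum_erase_add _ _ (mem_univ ∅)]
    simp only [sum_const, nsmul_eq_mul, card_empty, Nat.cast_zero, zero_mul, add_zero]
    exact sum_congr rfl fun S hS => mul_div_cancel₀ _ (by simpa [eq_comm] using hS)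
  have hcompl : ∑ C, ∑ _j ∈ Cᶜ, d C / (q - #C) = ∑ C, d C - d univ := by
    rw [← sum_erase_eq_sub (mem_univ univ), ← sum_erase_add _ _ (mem_univ univ)]
    simp only [sum_const, nsmul_eq_mul, card_compl, Fintype.card_fin, compl_univ, card_empty,
      Nat.cast_zero, zero_mul, add_zero]
    refine sum_congr rfl fun C hC => ?_
    have hC_lt : #C < q := by simpa using (card_lt_iff_ne_univ C).2 (ne_of_mem_erase hC)
    rw [Nat.cast_sub hC_lt.le]
    exact mul_div_cancel₀ _ (sub_ne_zero.2 (by exact_mod_cast hC_lt.ne'))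
  simp_rw [shapley_eq_sum_powerset_erase, sum_sub_distrib]
  rw [sum_sum_powerset_erase_insert (fun _ S => d S / #S),
    sum_sum_powerset_erase (fun _ C => d C / (q - #C)), hins, hcompl]
  simp [hd]

lemma shapley_congr {q : ℕ} {ν μ : Finset (Fin q) → ℝ} {j : Fin q}
    (h : ∀ C, ν (insert j C) - ν C = μ (insert j C) - μ C) : shapley ν j = shapley μ j := by
  simp only [shapley, h]

lemma shapley_eq_zero_of_null {q : ℕ} {ν : Finset (Fin q) → ℝ} {j : Fin q}
    (h : ∀ C, ν (insert j C) = ν C) : shapley ν j = 0 := by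
  simp [shapley, h]

lemma sum_shapley_inter {q : ℕ} (g : Finset (Fin q) → ℝ) (A : Finset (Fin q)) :
    ∑ j ∈ A, shapley (fun C => g (C ∩ A)) j = g A - g ∅ := by
  rw [sum_subset (subset_univ A) fun j _ hj =>
      shapley_eq_zero_of_null fun C => by rw [insert_inter_of_notMem hj], sum_shapley]
  simp

lemma sum_insert_filter_lt_sub {α β G : Type*} [DecidableEq α] [LinearOrder β] [AddCommGroup G]
    (g : Finset α → G) {ord : α → β} (hord : Injective ord) (A : Finset α) :
    ∑ j ∈ A, (g (insert j (A.filter (ord · < ord j))) - g (A.filter (ord · < ord j)))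
      = g A - g ∅ := by
  induction A using induction_on_max_value ord with
  | empty => simp
  | insert a s ha hmax ih =>
    have hbelow_a : (insert a s).filter (ord · < ord a) = s := by
      rw [filter_insert, if_neg (lt_irrefl _), filter_true_of_mem fun x hx =>
        (hmax x hx).lt_of_ne (hord.ne (by rintro rfl; exact ha hx))]
    have hbelow : ∀ j ∈ s, (insert a s).filter (ord · < ord j) = s.filter (ord · < ord j) :=
      fun j hj => by rw [filter_insert, if_neg (hmax j hj).not_gt]
    rw [sum_insert ha, hbelow_a, sum_congr rfl fun j hj => by rw [hbelow j hj], ih]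
    abel

lemma mem_preceding {q : ℕ} {π : Equiv.Perm (Fin q)} {j x : Fin q} :
    x ∈ preceding π j ↔ π.symm x < π.symm j := by
  simp only [preceding, mem_image, mem_filter, mem_univ, true_and]
  exact ⟨by rintro ⟨i, hi, rfl⟩; simpa using hi, fun h => ⟨π.symm x, h, by simp⟩⟩

lemma sum_marginal_preceding_inter {q : ℕ} (g : Finset (Fin q) → ℝ) (A : Finset (Fin q))
    (π : Equiv.Perm (Fin q)) :
    ∑ j ∈ A, (g (insert j (preceding π j) ∩ A) - g (preceding π j ∩ A)) = g A - g ∅ := by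
  have hfilter : ∀ j, preceding π j ∩ A = A.filter (π.symm · < π.symm j) := fun j => by
    ext x; simp [mem_preceding, and_comm]
  rw [← sum_insert_filter_lt_sub g π.symm.injective A]
  exact sum_congr rfl fun j hj => by rw [insert_inter_of_mem hj, hfilter]

lemma pairedEstimate_congr {q : ℕ} {ν μ : Finset (Fin q) → ℝ} (π : Equiv.Perm (Fin q))
    {j : Fin q} (h : ∀ C, ν (insert j C) - ν C = μ (insert j C) - μ C) :
    pairedEstimate ν π j = pairedEstimate μ π j := by
  simp only [pairedEstimate, add_sub_assoc, h]

lemma sum_pairedEstimate_inter {q : ℕ} (g : Finset (Fin q) → ℝ) (A : Finset (Fin q))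
    (π : Equiv.Perm (Fin q)) :
    ∑ j ∈ A, pairedEstimate (fun C => g (C ∩ A)) π j = g A - g ∅ := by
  simp only [pairedEstimate, add_sub_assoc, ← mul_sum, sum_add_distrib,
    sum_marginal_preceding_inter]
  ring

lemma sum_inter_insert_sub_sum_inter {α ι G : Type*} [DecidableEq α] [Fintype ι]
    [AddCommGroup G] {𝒜 : ι → Finset α} (hdisj : Pairwise (Disjoint on 𝒜))
    (νk : ι → Finset α → G) {j : α} {k : ι} (hj : j ∈ 𝒜 k) (C : Finset α) :
    ∑ l, νk l (insert j C ∩ 𝒜 l) - ∑ l, νk l (C ∩ 𝒜 l)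
      = νk k (insert j C ∩ 𝒜 k) - νk k (C ∩ 𝒜 k) := by
  rw [← sum_sub_distrib]
  refine sum_eq_single k (fun l _ hl => ?_) (by simp)
  rw [insert_inter_of_notMem (disjoint_left.1 (hdisj hl.symm) hj), sub_self]

theorem paired_permutationSHAP_additive_recovery_general (q K : ℕ)
    (𝒜 : Fin K → Finset (Fin q))
    (hdisj : ∀ k l, k ≠ l → Disjoint (𝒜 k) (𝒜 l))
    (ν : Finset (Fin q) → ℝ) (νk : Fin K → Finset (Fin q) → ℝ)
    (hν : ∀ C : Finset (Fin q), ν C = ∑ k, νk k (C ∩ 𝒜 k))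
    (π : Equiv.Perm (Fin q)) (k : Fin K) :
    ∑ j ∈ 𝒜 k, pairedEstimate ν π j = ∑ j ∈ 𝒜 k, shapley ν j := by
  set u : Finset (Fin q) → ℝ := fun C => νk k (C ∩ 𝒜 k)
  have hmarg : ∀ j ∈ 𝒜 k, ∀ C, ν (insert j C) - ν C = u (insert j C) - u C := fun j hj C => by
    rw [hν, hν]
    exact sum_inter_insert_sub_sum_inter hdisj νk hj C
  calc ∑ j ∈ 𝒜 k, pairedEstimate ν π j = ∑ j ∈ 𝒜 k, pairedEstimate u π j :=
        sum_congr rfl fun j hj => pairedEstimate_congr π (hmarg j hj)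
    _ = νk k (𝒜 k) - νk k ∅ := sum_pairedEstimate_inter _ _ π
    _ = ∑ j ∈ 𝒜 k, shapley u j := (sum_shapley_inter _ _).symm
    _ = ∑ j ∈ 𝒜 k, shapley ν j := sum_congr rfl fun j hj => (shapley_congr (hmarg j hj)).symm

/-- additive recovery property of the paired single-permutation
PermutationSHAP estimates. -/
theorem paired_permutationSHAP_additive_recovery (q K : ℕ) (hq : 1 ≤ q)
    (𝒜 : Fin K → Finset (Fin q))
    (hne : ∀ k, (𝒜 k).Nonempty)
    (hdisj : ∀ k l, k ≠ l → Disjoint (𝒜 k) (𝒜 l))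
    (hcover : Finset.univ.biUnion 𝒜 = (Finset.univ : Finset (Fin q)))
    (ν : Finset (Fin q) → ℝ) (νk : Fin K → Finset (Fin q) → ℝ)
    (hν : ∀ C : Finset (Fin q), ν C = ∑ k, νk k (C ∩ 𝒜 k))
    (π : Equiv.Perm (Fin q)) (k : Fin K) :
    ∑ j ∈ 𝒜 k, pairedEstimate ν π j = ∑ j ∈ 𝒜 k, shapley ν j :=
  paired_permutationSHAP_additive_recovery_general q K 𝒜 hdisj ν νk hν π k
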